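/- For probability distributions q₀, q₁ on a finite set S and p ∈ [0,1], with q = p·q₀ + (1-p)·q₁, the mutual information I = p·D(q₀‖q) + (1-p)·D(q₁‖q) satisfies I ≥ -log₂[p² + (1-p)² + 2p(1-p)·F(q₀,q₁)], where F(q₀,q₁) = Σ_m √(q₀(m)q₁(m)) and D(·‖·) is the Kullback–Leibler divergence in bits. -/

import Mathlib

/-- Kullback–Leibler divergence in bits, with conventions `0 * logb 2 0 = 0`
and division by zero equal to zero. -/
noncomputable def klDiv2 {S : Type} [Fintype S] (r s : S → ℝ) : ℝ :=
  ∑ m, r m * Real.logb 2 (r m / s m)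

/-!
Write `F` for the Bhattacharyya coefficient and `q = p q₀ + (1 - p) q₁`. Jensen's inequality
for `log₂`, applied to the points `√(s/r)` with weights `r`, gives `D(r‖s) ≥ -2 log₂ F(r,s)`.
Averaging this over `r = q₀, q₁` and using concavity of `log₂` once more bounds the mutual
information below by `-2 log₂ (p F(q₀,q) + (1-p) F(q₁,q))`. Finally, Cauchy–Schwarz applied to
`∑ (p √q₀ + (1-p) √q₁) √q` gives
`(p F(q₀,q) + (1-p) F(q₁,q))² ≤ p² + (1-p)² + 2p(1-p) F(q₀,q₁)`.
-/

open Real Finset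

lemma Real.concaveOn_logb {b : ℝ} (hb : 1 ≤ b) : ConcaveOn ℝ (Set.Ioi 0) (logb b) := by
  have : logb b = fun x => (log b)⁻¹ • log x := by
    ext x
    rw [logb, smul_eq_mul, div_eq_inv_mul]
  rw [this]
  exact strictConcaveOn_log_Ioi.concaveOn.smul (inv_nonneg.2 (log_nonneg hb))

section Bhattacharyya

variable {ι : Type*} [Fintype ι]

noncomputable def bhattacharyya (r s : ι → ℝ) : ℝ :=
  ∑ m, √(r m * s m)

lemma bhattacharyya_pos {r s : ι → ℝ} (hr1 : ∑ m, r m = 1) (hrs : ∀ m, 0 < r m → 0 < s m) :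
    0 < bhattacharyya r s := by
  obtain ⟨m, -, hm⟩ := exists_lt_of_sum_lt (s := univ) (f := 0) (g := r) (by simp [hr1])
  refine sum_pos' (fun _ _ => sqrt_nonneg _) ⟨m, mem_univ m, ?_⟩
  exact sqrt_pos.2 (mul_pos hm (hrs m hm))

lemma sq_bhattacharyya_mixture_le {q0 q1 : ι → ℝ}
    (h0 : ∀ m, 0 ≤ q0 m) (h1 : ∀ m, 0 ≤ q1 m) (hs0 : ∑ m, q0 m = 1) (hs1 : ∑ m, q1 m = 1)
    {p : ℝ} (hp0 : 0 ≤ p) (hp1 : p ≤ 1) :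
    (p * bhattacharyya q0 (fun m => p * q0 m + (1 - p) * q1 m) +
        (1 - p) * bhattacharyya q1 (fun m => p * q0 m + (1 - p) * q1 m)) ^ 2 ≤
      p ^ 2 + (1 - p) ^ 2 + 2 * p * (1 - p) * bhattacharyya q0 q1 := by
  set q := fun m => p * q0 m + (1 - p) * q1 m
  set v := fun m => p * √(q0 m) + (1 - p) * √(q1 m)
  have hlhs : p * bhattacharyya q0 q + (1 - p) * bhattacharyya q1 q = ∑ m, v m * √(q m) := by
    simp only [bhattacharyya, mul_sum, ← sum_add_distrib, sqrt_mul (h0 _), sqrt_mul (h1 _)]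
    exact sum_congr rfl fun m _ => by ring
  have hv : ∑ m, v m ^ 2 = p ^ 2 + (1 - p) ^ 2 + 2 * p * (1 - p) * bhattacharyya q0 q1 := by
    have hterm : ∀ m, v m ^ 2 =
        p ^ 2 * q0 m + (1 - p) ^ 2 * q1 m + 2 * p * (1 - p) * √(q0 m * q1 m) := fun m => by
      rw [sqrt_mul (h0 m)]
      linear_combination p ^ 2 * sq_sqrt (h0 m) + (1 - p) ^ 2 * sq_sqrt (h1 m)
    simp only [hterm, sum_add_distrib, ← mul_sum, hs0, hs1, bhattacharyya, mul_one]
  have hq : ∑ m, √(q m) ^ 2 = 1 := by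
    have hq0 : ∀ m, 0 ≤ q m := fun m =>
      add_nonneg (mul_nonneg hp0 (h0 m)) (mul_nonneg (sub_nonneg.2 hp1) (h1 m))
    simp only [sq_sqrt (hq0 _), q, sum_add_distrib, ← mul_sum, hs0, hs1]
    ring
  calc _ = (∑ m, v m * √(q m)) ^ 2 := by rw [hlhs]
    _ ≤ (∑ m, v m ^ 2) * ∑ m, √(q m) ^ 2 := sum_mul_sq_le_sq_mul_sq _ _ _
    _ = _ := by rw [hv, hq, mul_one]

end Bhattacharyya

section KLDivergence

variable {S : Type} [Fintype S]

lemma klDiv2_self (r : S → ℝ) : klDiv2 r r = 0 := by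
  refine sum_eq_zero fun m _ => ?_
  rcases eq_or_ne (r m) 0 with h | h
  · rw [h, zero_mul]
  · rw [div_self h, logb_one, mul_zero]

lemma neg_two_mul_logb_bhattacharyya_le_klDiv2 {r s : S → ℝ}
    (hr : ∀ m, 0 ≤ r m) (hr1 : ∑ m, r m = 1) (hrs : ∀ m, 0 < r m → 0 < s m) :
    -2 * logb 2 (bhattacharyya r s) ≤ klDiv2 r s := by
  -- On the support `t` of `r` the Jensen points `x m = √(s m / r m)` are positive.
  set t := univ.filter (fun m => 0 < r m)
  have ht : ∀ m ∈ t, 0 < r m := fun m hm => (mem_filter.1 hm).2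
  have hsupp : ∀ m ∈ univ, r m ≠ 0 → 0 < r m := fun m _ h => (hr m).lt_of_ne' h
  set x := fun m => √(s m) / √(r m)
  have hx : ∀ m ∈ t, x m ∈ Set.Ioi 0 := fun m hm =>
    div_pos (sqrt_pos.2 (hrs m (ht m hm))) (sqrt_pos.2 (ht m hm))
  have hD : klDiv2 r s = -2 * ∑ m ∈ t, r m • logb 2 (x m) := by
    rw [klDiv2, ← sum_filter_of_ne fun m hm h => hsupp m hm (left_ne_zero_of_mul h), mul_sum]
    refine sum_congr rfl fun m hm => ?_
    have hrs' : r m / s m = ((√(s m) / √(r m)) ^ 2)⁻¹ := by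
      rw [div_pow, sq_sqrt (hr m), sq_sqrt (hrs m (ht m hm)).le, inv_div]
    rw [hrs', logb_inv, logb_pow, smul_eq_mul]
    push_cast
    ring
  have hF : bhattacharyya r s = ∑ m ∈ t, r m • x m := by
    rw [bhattacharyya, ← sum_filter_of_ne fun m hm h => hsupp m hm fun h' => h (by simp [h'])]
    refine sum_congr rfl fun m hm => ?_
    have hsr : √(r m) ≠ 0 := (sqrt_pos.2 (ht m hm)).ne'
    rw [smul_eq_mul, sqrt_mul (hr m)]
    simp only [x]
    field_simp
    rw [sq_sqrt (hr m), mul_comm]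
  have htsum : ∑ m ∈ t, r m = 1 := by rw [sum_filter_of_ne fun m hm h => hsupp m hm h, hr1]
  have jensen := (concaveOn_logb one_le_two).le_map_sum (fun m hm => (ht m hm).le) htsum hx
  rw [hD, hF]
  linarith

end KLDivergence

theorem mutual_info_ge_neg_log_fid {S : Type} [Fintype S]
    (q0 q1 : S → ℝ) (h0 : ∀ m, 0 ≤ q0 m) (h1 : ∀ m, 0 ≤ q1 m)
    (hs0 : ∑ m, q0 m = 1) (hs1 : ∑ m, q1 m = 1)
    (p : ℝ) (hp : p ∈ Set.Icc (0:ℝ) 1) :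
    p * klDiv2 q0 (fun m => p * q0 m + (1-p) * q1 m) +
        (1-p) * klDiv2 q1 (fun m => p * q0 m + (1-p) * q1 m) ≥
      -Real.logb 2 (p^2 + (1-p)^2 + 2*p*(1-p) * ∑ m, Real.sqrt (q0 m * q1 m)) := by
  rcases hp.1.eq_or_lt with rfl | hp0
  · simp [klDiv2_self]
  rcases hp.2.eq_or_lt with rfl | hp1
  · simp [klDiv2_self]
  have hp1' : 0 < 1 - p := sub_pos.2 hp1
  set q := fun m => p * q0 m + (1 - p) * q1 m
  have hq0 : ∀ m, 0 < q0 m → 0 < q m := fun m hm =>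
    add_pos_of_pos_of_nonneg (mul_pos hp0 hm) (mul_nonneg hp1'.le (h1 m))
  have hq1 : ∀ m, 0 < q1 m → 0 < q m := fun m hm =>
    add_pos_of_nonneg_of_pos (mul_nonneg hp0.le (h0 m)) (mul_pos hp1' hm)
  have hF0 := bhattacharyya_pos hs0 hq0
  have hF1 := bhattacharyya_pos hs1 hq1
  have hmean : 0 < p * bhattacharyya q0 q + (1 - p) * bhattacharyya q1 q := by positivity
  have hconcave := (concaveOn_logb one_le_two).2 hF0 hF1 hp0.le hp1'.le (add_sub_cancel p 1)
  simp only [smul_eq_mul] at hconcave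
  calc -logb 2 (p ^ 2 + (1 - p) ^ 2 + 2 * p * (1 - p) * bhattacharyya q0 q1)
      ≤ -logb 2 ((p * bhattacharyya q0 q + (1 - p) * bhattacharyya q1 q) ^ 2) :=
        neg_le_neg <| logb_le_logb_of_le one_lt_two (pow_pos hmean 2)
          (sq_bhattacharyya_mixture_le h0 h1 hs0 hs1 hp0.le hp1.le)
    _ = -2 * logb 2 (p * bhattacharyya q0 q + (1 - p) * bhattacharyya q1 q) := by
        rw [logb_pow]; push_cast; ring
    _ ≤ p * (-2 * logb 2 (bhattacharyya q0 q)) +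
          (1 - p) * (-2 * logb 2 (bhattacharyya q1 q)) := by linarith
    _ ≤ p * klDiv2 q0 q + (1 - p) * klDiv2 q1 q := by
        gcongr
        · exact neg_two_mul_logb_bhattacharyya_le_klDiv2 h0 hs0 hq0
        · exact neg_two_mul_logb_bhattacharyya_le_klDiv2 h1 hs1 hq1
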